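/- A graph G contains no induced subgraph isomorphic to P3+P1 (the disjoint union of a 3-vertex path and an isolated vertex) if and only if every co-component of G (connected component of the complement) induces a subgraph that is 3P1-free or a disjoint union of complete graphs. -/

import Mathlib

open SimpleGraph

/-- A proper colouring of `G` given as a function to `ℕ`. -/
def IsProperColoring {V : Type*} (G : SimpleGraph V) (c : V → ℕ) : Prop :=
  ∀ u v, G.Adj u v → c u ≠ c v

/-- A vertex `v` is b-chromatic under `c`: it has a neighbour of every used colour
other than its own. -/
def IsBVertex {V : Type*} (G : SimpleGraph V) (c : V → ℕ) (v : V) : Prop :=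
  ∀ j ∈ Set.range c, j ≠ c v → ∃ u, G.Adj v u ∧ c u = j

/-- A b-colouring: a proper colouring in which every colour class contains a
b-chromatic vertex. -/
def IsBColoring {V : Type*} (G : SimpleGraph V) (c : V → ℕ) : Prop :=
  IsProperColoring G c ∧ ∀ j ∈ Set.range c, ∃ v, c v = j ∧ IsBVertex G c v

/-- The number of colours used by a colouring. -/
noncomputable def numColors {V : Type*} (c : V → ℕ) : ℕ := (Set.range c).ncard

/-- The b-chromatic number: the maximum number of colours in a b-colouring. -/
noncomputable def bChromaticNumber {V : Type*} (G : SimpleGraph V) : ℕ :=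
  sSup {k | ∃ c, IsBColoring G c ∧ numColors c = k}

/-- The m-degree `m(G)`: the largest `k` such that `G` has at least `k` vertices of
degree at least `k - 1`. -/
noncomputable def mDegree {V : Type*} (G : SimpleGraph V) : ℕ :=
  sSup {k | k ≤ {v : V | k ≤ (G.neighborSet v).ncard + 1}.ncard}

/-- The set of dense vertices: those of degree at least `m(G) - 1`. -/
def denseSet {V : Type*} (G : SimpleGraph V) : Set V :=
  {v | mDegree G ≤ (G.neighborSet v).ncard + 1}

/-- A graph is tight if it has exactly `m(G)` dense vertices, each of degree
exactly `m(G) - 1`. -/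
def IsTight {V : Type*} (G : SimpleGraph V) : Prop :=
  (denseSet G).ncard = mDegree G ∧
    ∀ v ∈ denseSet G, (G.neighborSet v).ncard = mDegree G - 1

/-- A fall colouring: a proper colouring in which every vertex has a neighbour of
every used colour other than its own. -/
def IsFallColoring {V : Type*} (G : SimpleGraph V) (c : V → ℕ) : Prop :=
  IsProperColoring G c ∧ ∀ v, ∀ j ∈ Set.range c, j ≠ c v → ∃ u, G.Adj v u ∧ c u = j

/-- The fall spectrum: the set of numbers of colours of fall colourings of `G`. -/
def fallSpectrum {V : Type*} (G : SimpleGraph V) : Set ℕ :=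
  {k | ∃ c, IsFallColoring G c ∧ numColors c = k}

/-- The outer boundary of a vertex set: vertices outside it with a neighbour in it. -/
def outerBoundary {V : Type*} (G : SimpleGraph V) (T : Set V) : Set V :=
  {s | s ∉ T ∧ ∃ t ∈ T, G.Adj s t}

/-- `P_3 + P_1`: the path `0 - 1 - 2` together with the isolated vertex `3`. -/
def p3p1Graph : SimpleGraph (Fin 4) :=
  SimpleGraph.fromRel (fun a b => (a = 0 ∧ b = 1) ∨ (a = 1 ∧ b = 2))

/-- `G` has no induced subgraph isomorphic to `H`. -/
def IndSubgraphFree {W V : Type*} (H : SimpleGraph W) (G : SimpleGraph V) : Prop :=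
  ∀ s : Set V, ¬ Nonempty (G.induce s ≃g H)

/-- `H` is `3P_1`-free: it has no independent set of three (distinct) vertices. -/
def ThreeP1Free {W : Type*} (H : SimpleGraph W) : Prop :=
  ∀ u v w : W, u ≠ v → u ≠ w → v ≠ w →
    ¬ H.Adj u v → ¬ H.Adj u w → ¬ H.Adj v w → False

/-- `H` is a disjoint union of complete graphs: two vertices are adjacent iff they
are distinct and lie in the same part of some partition. -/
def IsDisjointUnionOfCompleteGraphs {W : Type*} (H : SimpleGraph W) : Prop :=
  ∃ (ι : Type) (p : W → ι), ∀ u v, H.Adj u v ↔ (u ≠ v ∧ p u = p v)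

/-!
Taking complements, `G` is `(P₃ + P₁)`-free iff `Gᶜ` is paw-free, and the theorem becomes
Olariu's characterisation: a graph is paw-free iff each of its components is triangle-free or
complete multipartite.

In a paw-free graph a vertex adjacent to a vertex of a triangle is adjacent to a second one.
Propagating this along paths, every vertex of the component of a triangle `act` is adjacent to
`a` or to `c`. If a component contains a triangle `uvw`, every vertex of it is therefore adjacent
to two of `u, v, w`, so the ends of any edge `xz` have a common neighbour among them; hence every
vertex is adjacent to `x` or `z`, i.e. non-adjacency is transitive on the component.
-/

theorem indSubgraphFree_iff_not_isIndContained {W V : Type*} {H : SimpleGraph W}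
    {G : SimpleGraph V} : IndSubgraphFree H G ↔ ¬ H ⊴ G := by
  rw [isIndContained_iff_exists_iso_induce]
  exact ⟨fun h ⟨s, ⟨e⟩⟩ => h s ⟨e.symm⟩, fun h s ⟨e⟩ => h ⟨s, ⟨e.symm⟩⟩⟩

theorem threeP1Free_iff_cliqueFree_compl {W : Type*} {H : SimpleGraph W} :
    ThreeP1Free H ↔ Hᶜ.CliqueFree 3 := by
  classical
  constructor
  · intro h t ht
    obtain ⟨u, v, w, huv, huw, hvw, -⟩ := is3Clique_iff.1 ht
    exact h u v w huv.1 huw.1 hvw.1 huv.2 huw.2 hvw.2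
  · intro h u v w huv huw hvw nuv nuw nvw
    exact h _ (is3Clique_triple_iff.2 ⟨⟨huv, nuv⟩, ⟨huw, nuw⟩, ⟨hvw, nvw⟩⟩)

theorem isDisjointUnionOfCompleteGraphs_iff_isCompleteMultipartite_compl {W : Type}
    {H : SimpleGraph W} : IsDisjointUnionOfCompleteGraphs H ↔ Hᶜ.IsCompleteMultipartite := by
  constructor
  · rintro ⟨ι, p, hp⟩
    have same_part (x y : W) : ¬ Hᶜ.Adj x y ↔ p x = p y := by
      rw [compl_adj, hp]
      by_cases hxy : x = y <;> simp [hxy]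
    exact ⟨fun x y z hxy hyz =>
      (same_part x z).2 (((same_part x y).1 hxy).trans ((same_part y z).1 hyz))⟩
  · intro h
    refine ⟨Quotient h.setoid, Quotient.mk _, fun x y => ?_⟩
    rw [Quotient.eq]
    change _ ↔ _ ∧ ¬ Hᶜ.Adj x y
    rw [compl_adj]
    by_cases hxy : x = y <;> simp [hxy]

namespace SimpleGraph

variable {W : Type*} {H : SimpleGraph W}

theorem compl_induce (s : Set W) : (H.induce s)ᶜ = Hᶜ.induce s := by
  ext u v
  simp [compl_adj, Subtype.ext_iff]

/-- The paw is a triangle `abc` with a pendant edge `da`; it is the complement of `P₃ + P₁`.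
No distinctness of `d` from `b`, `c` is needed: `d = b` already gives `H.Adj d c`. -/
def IsPawFree (H : SimpleGraph W) : Prop :=
  ∀ ⦃a b c d : W⦄, H.Adj a b → H.Adj a c → H.Adj b c → H.Adj d a → H.Adj d b ∨ H.Adj d c

theorem isPawFree_iff_not_isIndContained : H.IsPawFree ↔ ¬ p3p1Graphᶜ ⊴ H := by
  constructor
  · rintro hH ⟨e⟩
    have adj (i j : Fin 4) : H.Adj (e i) (e j) ↔ p3p1Graphᶜ.Adj i j := e.map_adj_iff
    rcases hH ((adj 3 0).2 (by simp [p3p1Graph])) ((adj 3 2).2 (by simp [p3p1Graph]))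
      ((adj 0 2).2 (by simp [p3p1Graph])) ((adj 1 3).2 (by simp [p3p1Graph])) with h | h
    · simpa [p3p1Graph] using (adj 1 0).1 h
    · simpa [p3p1Graph] using (adj 1 2).1 h
  · intro h a b c d hab hac hbc hda
    by_contra! ⟨hdb, hdc⟩
    have hbd : b ≠ d := by rintro rfl; exact hdc hbc
    have hcd : c ≠ d := by rintro rfl; exact hdb hbc.symm
    have hinj : Function.Injective ![b, d, c, a] := by
      intro i j hij
      fin_cases i <;> fin_cases j <;>
        simp_all [hab.ne, hac.ne, hbc.ne, hda.ne, hab.ne', hac.ne', hbc.ne', hda.ne']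
    refine h ⟨⟨⟨_, hinj⟩, fun {i j} => ?_⟩⟩
    change H.Adj (![b, d, c, a] i) (![b, d, c, a] j) ↔ _
    fin_cases i <;> fin_cases j <;>
      simp [p3p1Graph, hab, hac, hbc, hda, hab.symm, hac.symm, hbc.symm, hda.symm, hdb, hdc,
        mt H.adj_symm hdb, mt H.adj_symm hdc]

namespace IsPawFree

variable (hH : H.IsPawFree)
include hH

theorem adj_or_adj_of_adj_left {a c t b y : W} (hac : H.Adj a c) (hat : H.Adj a t)
    (hct : H.Adj c t) (hba : H.Adj b a) (hby : H.Adj b y) : H.Adj y a ∨ H.Adj y c := by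
  rcases hH hac hat hct hba with hbc | hbt
  · exact hH hba hbc hac hby.symm
  · rcases hH hba hbt hat hby.symm with hya | hyt
    · exact .inl hya
    · exact hH hat.symm hct.symm hac hyt

theorem adj_or_adj_of_reachable {a c t y : W} (hac : H.Adj a c) (hat : H.Adj a t)
    (hct : H.Adj c t) (hy : H.Reachable a y) : H.Adj y a ∨ H.Adj y c := by
  rw [reachable_iff_reflTransGen] at hy
  induction hy with
  | refl => exact .inr hac
  | tail _ hby ih =>
    rcases ih with hba | hbc
    · exact hH.adj_or_adj_of_adj_left hac hat hct hba hby
    · exact (hH.adj_or_adj_of_adj_left hac.symm hct hat hbc hby).symm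

theorem isCompleteMultipartite_induce_supp {K : H.ConnectedComponent} {u v w : W}
    (hu : u ∈ K.supp) (huv : H.Adj u v) (huw : H.Adj u w) (hvw : H.Adj v w) :
    (H.induce K.supp).IsCompleteMultipartite := by
  have hv : v ∈ K.supp := K.mem_supp_of_adj_mem_supp hu huv
  have two_of_three (x : K.supp) :
      (H.Adj x u ∨ H.Adj x v) ∧ (H.Adj x u ∨ H.Adj x w) ∧ (H.Adj x v ∨ H.Adj x w) :=
    ⟨hH.adj_or_adj_of_reachable huv huw hvw (K.reachable_of_mem_supp hu x.2),
      hH.adj_or_adj_of_reachable huw huv hvw.symm (K.reachable_of_mem_supp hu x.2),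
      hH.adj_or_adj_of_reachable hvw huv.symm huw.symm (K.reachable_of_mem_supp hv x.2)⟩
  refine ⟨fun x y z hxy hyz hxz => ?_⟩
  obtain ⟨t, hxt, hzt⟩ : ∃ t, H.Adj x t ∧ H.Adj z t := by
    have : (H.Adj x u ∧ H.Adj z u) ∨ (H.Adj x v ∧ H.Adj z v) ∨ (H.Adj x w ∧ H.Adj z w) := by
      have := two_of_three x; have := two_of_three z; tauto
    rcases this with h | h | h <;> exact ⟨_, h⟩
  rcases hH.adj_or_adj_of_reachable hxz hxt hzt (K.reachable_of_mem_supp x.2 y.2) with h | h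
  · exact hxy h.symm
  · exact hyz h

end IsPawFree

theorem isPawFree_iff_forall_connectedComponent :
    H.IsPawFree ↔ ∀ K : H.ConnectedComponent,
      (H.induce K.supp).CliqueFree 3 ∨ (H.induce K.supp).IsCompleteMultipartite := by
  classical
  constructor
  · intro hH K
    refine or_iff_not_imp_left.2 fun h => ?_
    obtain ⟨s, hs⟩ := not_forall_not.1 h
    obtain ⟨u, v, w, huv, huw, hvw, -⟩ := is3Clique_iff.1 hs
    exact hH.isCompleteMultipartite_induce_supp u.2 huv huw hvw
  · intro hK a b c d hab hac hbc hda
    by_contra! ⟨hdb, hdc⟩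
    let K := H.connectedComponentMk a
    have ha : a ∈ K.supp := rfl
    have hb : b ∈ K.supp := K.mem_supp_of_adj_mem_supp ha hab
    have hc : c ∈ K.supp := K.mem_supp_of_adj_mem_supp ha hac
    have hd : d ∈ K.supp := K.mem_supp_of_adj_mem_supp ha hda.symm
    rcases hK K with h | h
    · exact h _ (is3Clique_triple_iff (a := (⟨a, ha⟩ : K.supp)) (b := ⟨b, hb⟩) (c := ⟨c, hc⟩)
        |>.2 ⟨hab, hac, hbc⟩)
    · exact h.trans ⟨b, hb⟩ ⟨d, hd⟩ ⟨c, hc⟩ (mt H.adj_symm hdb) hdc hbc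

end SimpleGraph

theorem stmt6_general {V : Type} (G : SimpleGraph V) :
    IndSubgraphFree p3p1Graph G ↔
    ∀ K : (Gᶜ).ConnectedComponent,
      ThreeP1Free (G.induce K.supp) ∨
      IsDisjointUnionOfCompleteGraphs (G.induce K.supp) := by
  rw [indSubgraphFree_iff_not_isIndContained, ← compl_isIndContained_compl,
    ← isPawFree_iff_not_isIndContained, isPawFree_iff_forall_connectedComponent]
  simp only [threeP1Free_iff_cliqueFree_compl,
    isDisjointUnionOfCompleteGraphs_iff_isCompleteMultipartite_compl, compl_induce]

theorem stmt6 {V : Type} [Fintype V] (G : SimpleGraph V) :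
    IndSubgraphFree p3p1Graph G ↔
    ∀ K : (Gᶜ).ConnectedComponent,
      ThreeP1Free (G.induce K.supp) ∨
      IsDisjointUnionOfCompleteGraphs (G.induce K.supp) :=
  stmt6_general G
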